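/- Let 𝒱 be a variety of groups with instances of nontrivial dominions. Then there exist a natural number n > 1 and a subgroup H of the relatively free 𝒱-group F_n(𝒱) of rank n such that H is strictly contained in dom_{F_n(𝒱)}^𝒱(H). -/

import Mathlib

/-- A bundled group: a type in universe `u` together with a group structure. -/
structure GroupT : Type (u + 1) where
  carrier : Type u
  [str : Group carrier]

attribute [instance] GroupT.str

/-- A variety of groups: a class of groups closed under isomorphism, subgroups,
homomorphic images, and arbitrary direct products indexed by types in the universe. -/
structure GroupVariety : Type (u + 1) where
  Mem : GroupT.{u} → Prop
  iso_closed : ∀ {G H : GroupT.{u}}, G.carrier ≃* H.carrier → Mem G → Mem H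
  subgroup_closed : ∀ (G : GroupT.{u}) (H : Subgroup G.carrier), Mem G → Mem ⟨H⟩
  quotient_closed : ∀ (G H : GroupT.{u}) (f : G.carrier →* H.carrier),
      Function.Surjective f → Mem G → Mem H
  pi_closed : ∀ (ι : Type u) (f : ι → GroupT.{u}),
      (∀ i, Mem (f i)) → Mem ⟨∀ i, (f i).carrier⟩

/-- A variety is nontrivial if it contains some nontrivial group and
does not contain all groups. -/
def GroupVariety.IsNontrivial (V : GroupVariety.{u}) : Prop :=
  (∃ G : GroupT.{u}, V.Mem G ∧ Nontrivial G.carrier) ∧ ∃ G : GroupT.{u}, ¬ V.Mem G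

/-- The dominion of a subgroup `H` of `G` relative to a class `C` of groups:
all elements of `G` on which any two homomorphisms into a `C`-group agreeing on `H`
must agree. -/
def dominion (C : GroupT.{u} → Prop) (G : Type u) [Group G] (H : Subgroup G) : Set G :=
  {a | ∀ K : GroupT.{u}, C K → ∀ f g : G →* K.carrier, (∀ h ∈ H, f h = g h) → f a = g a}

/-- The product variety `𝒩𝒬`: the class of groups having a normal subgroup in `𝒩`
with quotient in `𝒬`. -/
def ProductVariety (N Q : GroupVariety.{u}) (G : GroupT.{u}) : Prop :=
  ∃ (M : Subgroup G.carrier) (h : M.Normal),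
    N.Mem ⟨M⟩ ∧ (letI := h; Q.Mem ⟨G.carrier ⧸ M⟩)

/-- The verbal subgroup `𝒬(G)`: the intersection of all normal subgroups of `G`
whose quotient lies in `𝒬`. -/
def verbalSubgroup (Q : GroupVariety.{u}) (G : Type u) [Group G] : Subgroup G :=
  ⨅ M ∈ {M : Subgroup G | ∃ h : M.Normal, (letI := h; Q.Mem ⟨G ⧸ M⟩)}, M

/-- A class of groups has instances of nontrivial dominions if there is a group `G`
in the class and a subgroup `H` of `G` strictly contained in its dominion in `G`. -/
def HasNontrivialDominions (C : GroupT.{u} → Prop) : Prop :=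
  ∃ (G : GroupT.{u}) (H : Subgroup G.carrier),
    C G ∧ (H : Set G.carrier) ⊂ dominion C G.carrier H

instance verbalSubgroup_normal (Q : GroupVariety.{u}) (G : Type u) [Group G] :
    (verbalSubgroup Q G).Normal := by
  constructor
  intro x hx g
  simp only [verbalSubgroup, Subgroup.mem_iInf] at hx ⊢
  intro M hM
  exact hM.choose.conj_mem x (hx M hM) g

/-- The relatively free `𝒱`-group on a set `X`: the quotient of the free group on `X`
by the intersection of all normal subgroups with quotient in `𝒱`. -/
def relativelyFree (V : GroupVariety.{u}) (X : Type u) : Type u :=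
  FreeGroup X ⧸ verbalSubgroup V (FreeGroup X)

noncomputable instance (V : GroupVariety.{u}) (X : Type u) : Group (relativelyFree V X) :=
  QuotientGroup.Quotient.group _

/-!
Pick `a ∈ dom_G(H) \ H` with `G ∈ 𝒱`. Dominions are compact: if `a` lay outside the dominion of
`H ∩ S` in every finitely generated `S ∋ a`, the separating pairs `f_S, g_S : S → K_S` would glue
to two homomorphisms from `G` into the reduced product of the `K_S` over the directed set of finite
subsets (a quotient of a product, hence in `𝒱`) that agree on `H` but not at `a`. So `a` lies in
the dominion inside some `S = ⟨T⟩`, `T` finite, and `S ∈ 𝒱` is a quotient `π : F_n(𝒱) ↠ S` with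
`n = |T| + 2`. Finally dominions pull back along surjections, so `π⁻¹(H ∩ S)` is strictly contained
in its dominion in `F_n(𝒱)`.
-/

namespace GroupVariety

variable (V : GroupVariety.{u})

theorem mem_of_injective {G K : GroupT.{u}} (φ : G.carrier →* K.carrier)
    (hφ : Function.Injective φ) (hK : V.Mem K) : V.Mem G :=
  V.iso_closed (MonoidHom.ofInjective hφ).symm (V.subgroup_closed K φ.range hK)

theorem mem_prod_self {K : GroupT.{u}} (hK : V.Mem K) : V.Mem ⟨K.carrier × K.carrier⟩ :=
  V.mem_of_injective (K := ⟨ULift.{u} Bool → K.carrier⟩)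
    (MonoidHom.pi fun b => if b.down then MonoidHom.fst _ _ else MonoidHom.snd _ _)
    (fun x y h => Prod.ext (by simpa using congrFun h ⟨true⟩) (by simpa using congrFun h ⟨false⟩))
    (V.pi_closed _ (fun _ => K) fun _ => hK)

theorem verbalSubgroup_le_ker {F : Type u} [Group F] {K : GroupT.{u}} (hK : V.Mem K)
    (φ : F →* K.carrier) : verbalSubgroup V F ≤ φ.ker :=
  iInf₂_le φ.ker ⟨φ.normal_ker,
    V.mem_of_injective (K := K) (QuotientGroup.kerLift φ) (QuotientGroup.kerLift_injective φ) hK⟩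

end GroupVariety

namespace Filter

variable {ι : Type*} (l : Filter ι) (K : ι → Type*) [∀ i, Group (K i)]

def eventuallyOneSubgroup : Subgroup (∀ i, K i) where
  carrier := {x | ∀ᶠ i in l, x i = 1}
  one_mem' := Eventually.of_forall fun _ => rfl
  mul_mem' hx hy := by filter_upwards [hx, hy] with i hxi hyi; simp [hxi, hyi]
  inv_mem' hx := by filter_upwards [hx] with i hxi; simp [hxi]

instance : (l.eventuallyOneSubgroup K).Normal :=
  ⟨fun _ hx _ => by filter_upwards [hx] with i hxi; simp [hxi]⟩

variable {l K} {G : Type*} [Group G] {S : ι → Subgroup G}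

open Classical in
noncomputable def reducedProductLift (hS : ∀ x, ∀ᶠ i in l, x ∈ S i) (f : ∀ i, S i →* K i) :
    G →* (∀ i, K i) ⧸ l.eventuallyOneSubgroup K :=
  MonoidHom.mk' (fun x => QuotientGroup.mk fun i => if h : x ∈ S i then f i ⟨x, h⟩ else 1)
    fun x y => by
      rw [← QuotientGroup.mk_mul, QuotientGroup.eq]
      filter_upwards [hS x, hS y] with i hx hy
      simp only [Pi.mul_apply, Pi.inv_apply, dif_pos hx, dif_pos hy, dif_pos (mul_mem hx hy),
        ← map_mul]
      exact inv_mul_eq_one.2 rfl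

theorem reducedProductLift_apply_eq_iff (hS : ∀ x, ∀ᶠ i in l, x ∈ S i) (f g : ∀ i, S i →* K i)
    (x : G) : reducedProductLift hS f x = reducedProductLift hS g x ↔
      ∀ᶠ i in l, ∀ h : x ∈ S i, f i ⟨x, h⟩ = g i ⟨x, h⟩ := by
  refine QuotientGroup.eq.trans (eventually_congr (.of_forall fun i => ?_))
  by_cases h : x ∈ S i <;> simp [h, inv_mul_eq_one]

end Filter

theorem subset_dominion (C : GroupT.{u} → Prop) (G : Type u) [Group G] (H : Subgroup G) :
    (H : Set G) ⊆ dominion C G H :=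
  fun _ hx _ _ _ _ hfg => hfg _ hx

namespace GroupVariety

variable (V : GroupVariety.{u})

theorem mem_reducedProduct {ι : Type u} (l : Filter ι) (K : ι → GroupT.{u})
    (hK : ∀ i, V.Mem (K i)) :
    V.Mem ⟨(∀ i, (K i).carrier) ⧸ l.eventuallyOneSubgroup _⟩ :=
  V.quotient_closed _ _ (QuotientGroup.mk' _) (QuotientGroup.mk'_surjective _) (V.pi_closed ι K hK)

theorem exists_mem_dominion_of_eventually_mem {G : Type u} [Group G] {H : Subgroup G} {a : G}
    (ha : a ∈ dominion V.Mem G H) {ι : Type u} (l : Filter ι) [l.NeBot] (S : ι → Subgroup G)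
    (hS : ∀ x, ∀ᶠ i in l, x ∈ S i) (haS : ∀ i, a ∈ S i) :
    ∃ i, (⟨a, haS i⟩ : S i) ∈ dominion V.Mem (S i) (H.subgroupOf (S i)) := by
  by_contra! hcon
  simp only [dominion, Set.mem_ofPred_eq, not_forall] at hcon
  choose K hK f g hfg hne using hcon
  have hfg_lift := ha _ (V.mem_reducedProduct l K hK) (Filter.reducedProductLift hS f)
    (Filter.reducedProductLift hS g) fun x hx =>
      (Filter.reducedProductLift_apply_eq_iff hS f g x).2 (.of_forall fun i hi => hfg i ⟨x, hi⟩ hx)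
  obtain ⟨i, hi⟩ := ((Filter.reducedProductLift_apply_eq_iff hS f g a).1 hfg_lift).exists
  exact hne i (hi (haS i))

theorem exists_finset_mem_dominion_closure {G : Type u} [Group G] {H : Subgroup G} {a : G}
    (ha : a ∈ dominion V.Mem G H) :
    ∃ (T : Finset G) (haT : a ∈ Subgroup.closure (T : Set G)),
      (⟨a, haT⟩ : Subgroup.closure (T : Set G)) ∈
        dominion V.Mem _ (H.subgroupOf (Subgroup.closure (T : Set G))) := by
  classical
  obtain ⟨T, hT⟩ := V.exists_mem_dominion_of_eventually_mem ha Filter.atTop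
    (fun T : Finset G => Subgroup.closure ((insert a T : Finset G) : Set G))
    (fun x => (Filter.eventually_ge_atTop {x}).mono fun T hT =>
      Subgroup.subset_closure (Finset.mem_insert_of_mem (hT (Finset.mem_singleton_self x))))
    (fun T => Subgroup.subset_closure (Finset.mem_insert_self a T))
  exact ⟨insert a T, _, hT⟩

theorem apply_eq_of_mem_dominion {F G : Type u} [Group F] [Group G] {π : F →* G}
    (hπ : Function.Surjective π) {H : Subgroup G} {a : F} (ha : π a ∈ dominion V.Mem G H)
    {Q : GroupT.{u}} (hQ : V.Mem Q) {φ ψ : F →* Q.carrier} (hφ : π.ker ≤ φ.ker)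
    (hψ : π.ker ≤ ψ.ker) (hφψ : ∀ x ∈ H.comap π, φ x = ψ x) : φ a = ψ a := by
  have hπφ := π.liftOfRightInverse_comp_apply _ (Function.rightInverse_surjInv hπ) ⟨φ, hφ⟩
  have hπψ := π.liftOfRightInverse_comp_apply _ (Function.rightInverse_surjInv hπ) ⟨ψ, hψ⟩
  rw [← hπφ, ← hπψ]
  refine ha Q hQ _ _ fun y hy => ?_
  obtain ⟨x, rfl⟩ := hπ y
  rw [hπφ, hπψ]
  exact hφψ x hy

theorem mem_dominion_comap {F G : Type u} [Group F] [Group G] {π : F →* G}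
    (hπ : Function.Surjective π) {H : Subgroup G} {a : F} (ha : π a ∈ dominion V.Mem G H) :
    a ∈ dominion V.Mem F (H.comap π) := by
  intro K hK f g hfg
  have hker : ∀ n ∈ π.ker, f n = g n := fun n hn =>
    hfg n (by rw [Subgroup.mem_comap, (MonoidHom.mem_ker).1 hn]; exact H.one_mem)
  /- `(f, g)` and `(f, f)` send `ker π` onto the same `M ≤ K × K`, so both descend to
  `N(M) / M`; there the dominion forces `(f a, g a) ≡ (f a, f a) mod M`, i.e. `f a = g a`. -/
  have hker_comp : (f.prod g).comp π.ker.subtype = (f.prod f).comp π.ker.subtype :=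
    MonoidHom.ext fun n => Prod.ext rfl (hker n n.2).symm
  obtain ⟨M, hMf, hMg⟩ : ∃ M, π.ker.map (f.prod f) = M ∧ π.ker.map (f.prod g) = M :=
    ⟨_, rfl, by rw [← π.ker.range_subtype, MonoidHom.map_range, hker_comp, ← MonoidHom.map_range]⟩
  have hnormalizer (k : F →* K.carrier × K.carrier) (hk : π.ker.map k = M) (x : F) :
      k x ∈ Subgroup.normalizer (M : Set (K.carrier × K.carrier)) :=
    hk ▸ Subgroup.le_normalizer_map k
      (Subgroup.mem_map_of_mem k (by rw [Subgroup.normalizer_eq_top_iff.2 π.normal_ker]; trivial))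
  let N := Subgroup.normalizer (M : Set (K.carrier × K.carrier))
  let q := QuotientGroup.mk' (M.subgroupOf N)
  have hQ : V.Mem ⟨N ⧸ M.subgroupOf N⟩ :=
    V.quotient_closed _ _ q (QuotientGroup.mk'_surjective _)
      (V.subgroup_closed _ _ (V.mem_prod_self hK))
  let φ := q.comp ((f.prod g).codRestrict N (hnormalizer _ hMg))
  let ψ := q.comp ((f.prod f).codRestrict N (hnormalizer _ hMf))
  have hφψ : φ a = ψ a := by
    refine V.apply_eq_of_mem_dominion hπ ha hQ (fun n hn => ?_) (fun n hn => ?_) fun x hx => ?_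
    · exact (QuotientGroup.eq_one_iff _).2 (hMg ▸ ⟨n, hn, rfl⟩)
    · exact (QuotientGroup.eq_one_iff _).2 (hMf ▸ ⟨n, hn, rfl⟩)
    · simp [φ, ψ, hfg x hx]
  have hM := QuotientGroup.eq.1 hφψ
  rw [Subgroup.mem_subgroupOf, ← hMf] at hM
  obtain ⟨n, -, hna⟩ := hM
  have h1 : f n = 1 := by simpa using congrArg Prod.fst hna
  have h2 : f n = (g a)⁻¹ * f a := by simpa using congrArg Prod.snd hna
  rw [h1, eq_comm, inv_mul_eq_one] at h2
  exact h2.symm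

end GroupVariety

namespace relativelyFree

variable (V : GroupVariety.{u}) {X : Type u} {K : GroupT.{u}}

noncomputable def lift (hK : V.Mem K) (v : X → K.carrier) : relativelyFree V X →* K.carrier :=
  QuotientGroup.lift _ (FreeGroup.lift v) (V.verbalSubgroup_le_ker hK _)

theorem lift_surjective (hK : V.Mem K) {v : X → K.carrier}
    (hv : Subgroup.closure (Set.range v) = ⊤) : Function.Surjective (lift V hK v) := by
  intro y
  obtain ⟨w, hw⟩ : y ∈ (FreeGroup.lift v).range := by
    rw [FreeGroup.range_lift_eq_closure, hv]; trivial
  exact ⟨QuotientGroup.mk w, hw⟩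

theorem exists_surjective_closure {G : GroupT.{u}} (hG : V.Mem G) (T : Finset G.carrier) {n : ℕ}
    (hn : T.card ≤ n) :
    ∃ π : relativelyFree V (ULift.{u} (Fin n)) →* Subgroup.closure (T : Set G.carrier),
      Function.Surjective π := by
  let v (i : ULift.{u} (Fin n)) : Subgroup.closure (T : Set G.carrier) :=
    if h : i.down.val < T.toList.length then
      ⟨T.toList[i.down.val], Subgroup.subset_closure (Finset.mem_toList.1 (List.getElem_mem h))⟩
    else 1
  refine ⟨lift V (V.subgroup_closed G _ hG) v, lift_surjective V _ ?_⟩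
  rw [eq_top_iff, ← Subgroup.closure_closure_coe_preimage (k := (T : Set G.carrier))]
  refine Subgroup.closure_mono fun x (hx : x.val ∈ T) => ?_
  obtain ⟨i, hi, hix⟩ := List.getElem_of_mem (Finset.mem_toList.2 hx)
  rw [Finset.length_toList] at hi
  refine ⟨⟨⟨i, by omega⟩⟩, ?_⟩
  simp [v, hi, hix]

end relativelyFree

theorem stmt15 (𝒱 : GroupVariety.{u}) (h : HasNontrivialDominions 𝒱.Mem) :
    ∃ n : ℕ, 1 < n ∧
      ∃ H : Subgroup (relativelyFree 𝒱 (ULift.{u} (Fin n))),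
        (H : Set (relativelyFree 𝒱 (ULift.{u} (Fin n)))) ⊂
          dominion 𝒱.Mem (relativelyFree 𝒱 (ULift.{u} (Fin n))) H := by
  obtain ⟨G, H, hG, hH⟩ := h
  obtain ⟨a, ha_dom, ha_H⟩ := Set.exists_of_ssubset hH
  obtain ⟨T, haT, ha_domT⟩ := 𝒱.exists_finset_mem_dominion_closure ha_dom
  obtain ⟨π, hπ⟩ :=
    relativelyFree.exists_surjective_closure 𝒱 hG T (n := T.card + 2) (Nat.le_add_right _ _)
  obtain ⟨b, hb⟩ := hπ ⟨a, haT⟩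
  refine ⟨T.card + 2, by omega, (H.subgroupOf _).comap π,
    (Set.ssubset_iff_of_subset (subset_dominion _ _ _)).2 ⟨b, ?_, ?_⟩⟩
  · exact 𝒱.mem_dominion_comap hπ (hb ▸ ha_domT)
  · simpa [Subgroup.mem_subgroupOf, hb] using ha_H
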